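/- For every integer N ≥ 1, the number of pairs (x,y) of integers with |x| ≤ N, |y| ≤ N, and |x+y| ≤ N equals 3N² + 3N + 1. Consequently, if p1, p2, p3 ∈ [1,∞) satisfy 1/p1 + 1/p2 + 1/p3 = 2 and f^{(N)} denotes the indicator function of the integer interval [−N, N] ⊆ ℤ, then ⟨f^{(N)}*f^{(N)}, f^{(N)}⟩ = 3N² + 3N + 1 while ∏_{j=1}^3 ‖f^{(N)}‖_{p_j} = (2N+1)², so that ⟨f^{(N)}*f^{(N)}, f^{(N)}⟩ ≥ (3/4) ∏_{j=1}^3 ‖f^{(N)}‖_{p_j}, and the ratio ⟨f^{(N)}*f^{(N)}, f^{(N)}⟩ / ∏_{j=1}^3 ‖f^{(N)}‖_{p_j} tends to 3/4 as N → ∞. -/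
import Mathlib


/-- The ℓ^p norm of a real-valued function on ℤ (counting measure). -/
noncomputable def pnormR (f : ℤ → ℝ) (p : ℝ) : ℝ :=
  (∑' x, |f x| ^ p) ^ (1 / p)

/-- The indicator function of the integer interval [-N, N]. -/
def indN (N : ℕ) : ℤ → ℝ := fun x => if |x| ≤ (N : ℤ) then 1 else 0

/-- The trilinear Young form ⟨f * f, f⟩ for f = indN N. -/
noncomputable def triformN (N : ℕ) : ℝ :=
  ∑' q : ℤ × ℤ, indN N q.1 * indN N q.2 * indN N (q.1 + q.2)

open Finset Filter

lemma sumAbs (N : ℕ) : ∑ x ∈ Finset.Icc (-(N:ℤ)) N, |x| = N * (N + 1) := by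
  induction N with
  | zero => simp
  | succ n ih =>
    have hIcc : Finset.Icc (-((n+1:ℕ):ℤ)) ((n+1:ℕ):ℤ) =
        insert (-(n:ℤ) - 1) (insert ((n:ℤ) + 1) (Finset.Icc (-(n:ℤ)) n)) := by
      ext x; simp [Finset.mem_Icc]; omega
    rw [hIcc, Finset.sum_insert (by simp [Finset.mem_Icc] <;> omega),
      Finset.sum_insert (by simp [Finset.mem_Icc] <;> omega), ih]
    have h1 : |(-(n:ℤ) - 1)| = (n:ℤ) + 1 := by
      rw [abs_of_nonpos (show (-(n:ℤ) - 1) ≤ 0 by omega)]; omega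
    have h2 : |((n:ℤ) + 1)| = (n:ℤ) + 1 := abs_of_nonneg (by omega)
    rw [h1, h2]; push_cast; ring

lemma innerCard (N : ℕ) (x : ℤ) (hx : x ∈ Finset.Icc (-(N:ℤ)) N) :
    (((Finset.Icc (-(N:ℤ)) N).filter (fun y => |x + y| ≤ (N:ℤ))).card : ℤ) =
      2 * N + 1 - |x| := by
  simp only [Finset.mem_Icc] at hx
  rcases le_total 0 x with h | h
  · have : (Finset.Icc (-(N:ℤ)) N).filter (fun y => |x + y| ≤ (N:ℤ)) =
        Finset.Icc (-(N:ℤ)) (N - x) := by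
      ext y; simp [Finset.mem_Icc, abs_le]; omega
    rw [this, Int.card_Icc, abs_of_nonneg h]
    omega
  · have : (Finset.Icc (-(N:ℤ)) N).filter (fun y => |x + y| ≤ (N:ℤ)) =
        Finset.Icc (-(N:ℤ) - x) N := by
      ext y; simp [Finset.mem_Icc, abs_le]; omega
    rw [this, Int.card_Icc, abs_of_nonpos h]
    omega

lemma countCard (N : ℕ) :
    ((((Finset.Icc (-(N : ℤ)) (N : ℤ)) ×ˢ (Finset.Icc (-(N : ℤ)) (N : ℤ))).filter
        (fun q => |q.1 + q.2| ≤ (N : ℤ))).card : ℤ) = 3 * N ^ 2 + 3 * N + 1 := by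
  rw [Finset.card_filter, Finset.sum_product]
  have key : ∀ x ∈ Finset.Icc (-(N:ℤ)) N,
      ((∑ y ∈ Finset.Icc (-(N:ℤ)) N, if |x + y| ≤ (N:ℤ) then 1 else 0 : ℕ) : ℤ) =
        2 * N + 1 - |x| := by
    intro x hx
    rw [← Finset.card_filter]
    exact innerCard N x hx
  push_cast
  rw [Finset.sum_congr rfl (fun x hx => by exact_mod_cast key x hx)]
  rw [Finset.sum_sub_distrib, Finset.sum_const, sumAbs, Int.card_Icc]
  have : ((N:ℤ) + 1 - -(N:ℤ)).toNat = 2 * N + 1 := by omega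
  rw [this]
  push_cast; ring

lemma countCardNat (N : ℕ) :
    ((((Finset.Icc (-(N : ℤ)) (N : ℤ)) ×ˢ (Finset.Icc (-(N : ℤ)) (N : ℤ))).filter
        (fun q => |q.1 + q.2| ≤ (N : ℤ))).card) = 3 * N ^ 2 + 3 * N + 1 := by
  have := countCard N
  exact_mod_cast this

lemma triform_eq (N : ℕ) : triformN N = 3 * (N : ℝ) ^ 2 + 3 * (N : ℝ) + 1 := by
  set S := (((Finset.Icc (-(N : ℤ)) (N : ℤ)) ×ˢ (Finset.Icc (-(N : ℤ)) (N : ℤ))).filter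
      (fun q => |q.1 + q.2| ≤ (N : ℤ))) with hS
  have hmem : ∀ q : ℤ × ℤ, q ∈ S ↔ (|q.1| ≤ (N:ℤ) ∧ |q.2| ≤ (N:ℤ) ∧ |q.1 + q.2| ≤ (N:ℤ)) := by
    intro q
    simp [hS, Finset.mem_filter, Finset.mem_product, Finset.mem_Icc, abs_le, and_assoc]
  have h0 : ∀ q : ℤ × ℤ, q ∉ S → indN N q.1 * indN N q.2 * indN N (q.1 + q.2) = 0 := by
    intro q hq
    rw [hmem] at hq
    push_neg at hq
    unfold indN
    by_cases h1 : |q.1| ≤ (N:ℤ)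
    · by_cases h2 : |q.2| ≤ (N:ℤ)
      · have := hq h1 h2
        simp [h1, h2, this]
      · simp [h2]
    · simp [h1]
  rw [triformN, tsum_eq_sum h0]
  have h1 : ∀ q ∈ S, indN N q.1 * indN N q.2 * indN N (q.1 + q.2) = 1 := by
    intro q hq
    rw [hmem] at hq
    simp [indN, hq.1, hq.2.1, hq.2.2]
  have hc : S.card = 3 * N ^ 2 + 3 * N + 1 := countCardNat N
  rw [Finset.sum_congr rfl h1, Finset.sum_const, hc]
  push_cast; ring

lemma pnorm_eq (N : ℕ) (p : ℝ) (hp : 1 ≤ p) :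
    pnormR (indN N) p = (2 * (N : ℝ) + 1) ^ (1 / p) := by
  have hp0 : p ≠ 0 := by linarith
  have h0 : ∀ x : ℤ, x ∉ Finset.Icc (-(N:ℤ)) N → |indN N x| ^ p = 0 := by
    intro x hx
    simp only [Finset.mem_Icc] at hx
    have : ¬ |x| ≤ (N:ℤ) := by rw [abs_le]; omega
    simp [indN, this, Real.zero_rpow hp0]
  rw [pnormR, tsum_eq_sum h0]
  have h1 : ∀ x ∈ Finset.Icc (-(N:ℤ)) N, |indN N x| ^ p = 1 := by
    intro x hx
    simp only [Finset.mem_Icc] at hx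
    have : |x| ≤ (N:ℤ) := by rw [abs_le]; omega
    simp [indN, this]
  rw [Finset.sum_congr rfl h1, Finset.sum_const, Int.card_Icc]
  have : ((N:ℤ) + 1 - -(N:ℤ)).toNat = 2 * N + 1 := by omega
  rw [this]
  push_cast
  norm_num

lemma pnorm_prod (N : ℕ) (p1 p2 p3 : ℝ) (h1 : 1 ≤ p1) (h2 : 1 ≤ p2) (h3 : 1 ≤ p3)
    (hsum : 1 / p1 + 1 / p2 + 1 / p3 = 2) :
    pnormR (indN N) p1 * pnormR (indN N) p2 * pnormR (indN N) p3 =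
      (2 * (N : ℝ) + 1) ^ 2 := by
  rw [pnorm_eq N p1 h1, pnorm_eq N p2 h2, pnorm_eq N p3 h3]
  have hpos : (0:ℝ) < 2 * (N:ℝ) + 1 := by positivity
  rw [← Real.rpow_add hpos, ← Real.rpow_add hpos, hsum]
  rw [show ((2:ℝ):ℝ) = ((2:ℕ):ℝ) by norm_num, Real.rpow_natCast]

theorem interval_near_extremizer :
    (∀ N : ℕ, 1 ≤ N →
      (((Finset.Icc (-(N : ℤ)) (N : ℤ)) ×ˢ (Finset.Icc (-(N : ℤ)) (N : ℤ))).filter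
          (fun q => |q.1 + q.2| ≤ (N : ℤ))).card = 3 * N ^ 2 + 3 * N + 1) ∧
    ∀ p1 p2 p3 : ℝ, 1 ≤ p1 → 1 ≤ p2 → 1 ≤ p3 → 1 / p1 + 1 / p2 + 1 / p3 = 2 →
      (∀ N : ℕ, 1 ≤ N →
        triformN N = 3 * (N : ℝ) ^ 2 + 3 * (N : ℝ) + 1 ∧
        pnormR (indN N) p1 * pnormR (indN N) p2 * pnormR (indN N) p3 =
          (2 * (N : ℝ) + 1) ^ 2 ∧
        triformN N ≥
          (3 / 4) * (pnormR (indN N) p1 * pnormR (indN N) p2 * pnormR (indN N) p3)) ∧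
      Filter.Tendsto
        (fun N : ℕ =>
          triformN N / (pnormR (indN N) p1 * pnormR (indN N) p2 * pnormR (indN N) p3))
        Filter.atTop (nhds (3 / 4)) := by
  constructor
  · intro N _; exact countCardNat N
  intro p1 p2 p3 h1 h2 h3 hsum
  constructor
  · intro N _
    refine ⟨triform_eq N, pnorm_prod N p1 p2 p3 h1 h2 h3 hsum, ?_⟩
    rw [triform_eq N, pnorm_prod N p1 p2 p3 h1 h2 h3 hsum]
    nlinarith [sq_nonneg ((N:ℝ))]
  · have heq : ∀ N : ℕ,
        triformN N / (pnormR (indN N) p1 * pnormR (indN N) p2 * pnormR (indN N) p3) =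
        3 / 4 + (1 / 4) * ((2 * (N:ℝ) + 1) ^ 2)⁻¹ := by
      intro N
      rw [triform_eq N, pnorm_prod N p1 p2 p3 h1 h2 h3 hsum]
      have hne : (2 * (N:ℝ) + 1) ^ 2 ≠ 0 := by positivity
      field_simp
      ring
    have hlim : Filter.Tendsto (fun N : ℕ => 3 / 4 + (1 / 4) * ((2 * (N:ℝ) + 1) ^ 2)⁻¹)
        Filter.atTop (nhds (3 / 4)) := by
      have hg : Filter.Tendsto (fun N : ℕ => (2 * (N:ℝ) + 1) ^ 2) Filter.atTop Filter.atTop := by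
        apply Filter.tendsto_atTop_mono (f := fun N : ℕ => (N:ℝ))
        · intro n; nlinarith [(Nat.cast_nonneg n : (0:ℝ) ≤ n)]
        · exact tendsto_natCast_atTop_atTop
      have := hg.inv_tendsto_atTop
      have h := (tendsto_const_nhds (x := (1/4 : ℝ)) (f := Filter.atTop (α := ℕ))).mul this
      simpa using (tendsto_const_nhds (x := (3/4 : ℝ)) (f := Filter.atTop (α := ℕ))).add h
    exact hlim.congr (fun N => (heq N).symm)
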